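/- Let Q^{−1} := (3/2)P + K − I (a positive definite symmetric matrix since μ > 1). Then: (i) for every x ∈ ℝ^N with x̄ ≥ −1, V(x + I₊) ≥ (1/2)⟨x, Q^{−1}x⟩; and (ii) for every x ∈ ℝ^N with |x̄| ≤ 1, (1/4)Σ_k x_k⁴ − |Σ_k x_k³| + (1/2)⟨x, (K + 2I)x⟩ ≥ (1/2)⟨x, Q^{−1}x⟩. -/

import Mathlib

open Real MeasureTheory Matrix Filter

noncomputable section

/-- The discrete Laplacian `K` as an `N × N` matrix:
`(Kx)_k = μ/(4 sin²(π/N)) (2 x_k − x_{k+1} − x_{k−1})` with periodic indices. -/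
def Kdisc (μ : ℝ) (N : ℕ) : Matrix (Fin N) (Fin N) ℝ :=
  Matrix.of fun k l =>
    μ / (4 * Real.sin (Real.pi / N) ^ 2) *
      ((if l = k then 2 else 0) - (if (l : ℕ) = ((k : ℕ) + 1) % N then 1 else 0)
        - (if (l : ℕ) = ((k : ℕ) + (N - 1)) % N then 1 else 0))

/-- The energy `V(x) = (1/4)Σ x_k⁴ + (1/2)⟨x,(K−I)x⟩ + N/4`. -/
def Venergy (μ : ℝ) (N : ℕ) (x : Fin N → ℝ) : ℝ :=
  (1 / 4) * ∑ k, x k ^ 4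
    + (1 / 2) * ∑ k, x k * ((Kdisc μ N).mulVec x k - x k)
    + N / 4

/-- The `k`-th partial derivative `∂_k φ(x)`. -/
def pgrad (N : ℕ) (φ : (Fin N → ℝ) → ℝ) (x : Fin N → ℝ) (k : Fin N) : ℝ :=
  fderiv ℝ φ x (Pi.single k 1)

/-- Squared Euclidean norm of the gradient `|∇φ(x)|²`. -/
def gradSq (N : ℕ) (φ : (Fin N → ℝ) → ℝ) (x : Fin N → ℝ) : ℝ :=
  ∑ k, pgrad N φ x k ^ 2

/-- The Laplacian `Δφ(x) = Σ_k ∂²_k φ(x)`. -/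
def lapl (N : ℕ) (φ : (Fin N → ℝ) → ℝ) (x : Fin N → ℝ) : ℝ :=
  ∑ k, fderiv ℝ (fun y => pgrad N φ y k) x (Pi.single k 1)

/-- The Hessian quadratic form `⟨w, Hess φ(x) w⟩`. -/
def hessQF (N : ℕ) (φ : (Fin N → ℝ) → ℝ) (x w : Fin N → ℝ) : ℝ :=
  fderiv ℝ (fun y => fderiv ℝ φ y w) x w

/-- The orthogonal projection `P` onto the span of `(1,…,1)`, as a matrix. -/
def Pmat (N : ℕ) : Matrix (Fin N) (Fin N) ℝ := Matrix.of fun _ _ => 1 / (N : ℝ)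

/-- The unnormalised equilibrium density `e^{−V(x)/(hN)}`. -/
def dens (μ : ℝ) (N : ℕ) (h : ℝ) (x : Fin N → ℝ) : ℝ :=
  Real.exp (-(Venergy μ N x) / (h * N))

/-- The rescaled potential `f(x) = V(√N x)/(2N)` of the Witten Laplacian. -/
def fWit (μ : ℝ) (N : ℕ) (x : Fin N → ℝ) : ℝ :=
  Venergy μ N (fun k => Real.sqrt N * x k) / (2 * N)

/-- The quasimode `χ(x) = (2/√(2πh)) ∫₀^{x̄} e^{−t²/(2h)} dt`. -/
def chiQ (N : ℕ) (h : ℝ) (x : Fin N → ℝ) : ℝ :=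
  (2 / Real.sqrt (2 * Real.pi * h)) *
    ∫ t in (0:ℝ)..((1 / N) * ∑ j, x j), Real.exp (-t ^ 2 / (2 * h))

/-- The matrix `αP + K + βI`. -/
def Mαβ (μ α β : ℝ) (N : ℕ) : Matrix (Fin N) (Fin N) ℝ :=
  α • Pmat N + Kdisc μ N + β • (1 : Matrix (Fin N) (Fin N) ℝ)

/-- The covariance matrix `Q = (αP + K + βI)⁻¹`. -/
def Qmat (μ α β : ℝ) (N : ℕ) : Matrix (Fin N) (Fin N) ℝ := (Mαβ μ α β N)⁻¹

/-- The generator `L_h φ = −hNΔφ + ∇V·∇φ`. -/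
def Lop (μ : ℝ) (N : ℕ) (h : ℝ) (φ : (Fin N → ℝ) → ℝ) (x : Fin N → ℝ) : ℝ :=
  -(h * N) * lapl N φ x + ∑ k, pgrad N (Venergy μ N) x k * pgrad N φ x k

end

/-- The matrix `Q⁻¹ = (3/2)P + K − I`. -/
noncomputable def Mq (μ : ℝ) (N : ℕ) : Matrix (Fin N) (Fin N) ℝ :=
  (3 / 2 : ℝ) • Pmat N + Kdisc μ N - 1

/-!
The whole argument rests on the discrete Wirtinger inequality
`⟨x, K x⟩ ≥ μ (Σ x_k² − N x̄²)`: the constant `4 sin²(π/N)` in `K` is exactly the spectral gap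
of the cycle Laplacian, which one sees by Parseval's identity for the discrete Fourier transform,
where the forward difference becomes multiplication by `e^{2πik/N} − 1`. Hence
`⟨x, Q⁻¹x⟩ ≥ (μ − 1)(Σ x_k² − N x̄²) + N x̄²/2`, which is positive definiteness.

`K` annihilates constants, so both quadratic lower bounds reduce, after expanding, to
`Σ_k (x_k⁴/4 + ε x_k³ + 3x_k²/2) ≥ (3/4) N x̄²` with `ε = ±1` and `ε x̄ ≥ −1`. The summand is
`(x_k + ε)⁴/4` plus an affine function, so by the power-mean inequality the sum is at least `N`
times its value at `x̄`, and there the difference is `x̄²(εx̄ + 1)(εx̄ + 3)/4 ≥ 0`.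
-/

open Finset

theorem sin_pi_div_le_sin_pi_mul_div {N v : ℕ} (hv : 1 ≤ v) (hvN : v + 1 ≤ N) :
    sin (π / N) ≤ sin (π * v / N) := by
  have hv' : (1 : ℝ) ≤ v := by exact_mod_cast hv
  have hvN' : (v : ℝ) + 1 ≤ N := by exact_mod_cast hvN
  have hN : (0 : ℝ) < N := by linarith
  have hπN : π / N ∈ Set.Icc 0 π := ⟨by positivity, div_le_self pi_pos.le (by linarith)⟩
  have hmem : π * v / N ∈ Set.Icc (π / N) (π - π / N) := by
    rw [show π - π / N = π * (N - 1) / N by field_simp]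
    exact ⟨div_le_div_of_nonneg_right (le_mul_of_one_le_right pi_pos.le hv') hN.le,
      div_le_div_of_nonneg_right (mul_le_mul_of_nonneg_left (by linarith) pi_pos.le) hN.le⟩
  have h := strictConcaveOn_sin_Icc.concaveOn.min_le_of_mem_Icc hπN
    ⟨by linarith [hπN.2], by linarith [hπN.1]⟩ hmem
  rwa [sin_pi_sub, min_self] at h

namespace ZMod

variable {N : ℕ} [NeZero N]

theorem sum_norm_sq_dft (Φ : ZMod N → ℂ) : ∑ k, ‖𝓕 Φ k‖ ^ 2 = N * ∑ j, ‖Φ j‖ ^ 2 := by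
  have hconj (k : ZMod N) :
      starRingEnd ℂ (𝓕 Φ k) = ∑ j, starRingEnd ℂ (Φ j) * stdAddChar (k * j) := by
    simp only [dft_apply, map_sum, smul_eq_mul, map_mul, ← AddChar.map_neg_eq_conj, neg_neg,
      mul_comm]
  have hinv (j : ZMod N) : ∑ k, stdAddChar (k * j) * 𝓕 Φ k = N * Φ j := by
    have h := invDFT_apply (𝓕 Φ) j
    rw [LinearEquiv.symm_apply_apply] at h
    rw [h, smul_eq_mul, mul_inv_cancel_left₀ (NeZero.ne _)]
    simp only [smul_eq_mul]
  have key : ∑ k, 𝓕 Φ k * starRingEnd ℂ (𝓕 Φ k) = N * ∑ j, Φ j * starRingEnd ℂ (Φ j) := by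
    calc ∑ k, 𝓕 Φ k * starRingEnd ℂ (𝓕 Φ k)
        = ∑ j, starRingEnd ℂ (Φ j) * ∑ k, stdAddChar (k * j) * 𝓕 Φ k := by
          simp_rw [hconj, mul_sum]
          rw [sum_comm]
          exact sum_congr rfl fun _ _ => sum_congr rfl fun _ _ => by ring
      _ = N * ∑ j, Φ j * starRingEnd ℂ (Φ j) := by
          simp_rw [hinv, mul_sum]
          exact sum_congr rfl fun _ _ => by ring
  simp_rw [Complex.mul_conj, Complex.normSq_eq_norm_sq] at key
  exact_mod_cast key

theorem dft_comp_add_one (Φ : ZMod N → ℂ) (k : ZMod N) :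
    𝓕 (fun j => Φ (j + 1)) k = stdAddChar k * 𝓕 Φ k := by
  simp only [dft_apply, smul_eq_mul, mul_sum]
  refine Fintype.sum_equiv (Equiv.addRight 1) _ _ fun j => ?_
  rw [Equiv.coe_addRight, ← mul_assoc, ← AddChar.map_add_eq_mul]
  congr 2
  ring

theorem four_sin_sq_le_norm_stdAddChar_sub_one_sq {k : ZMod N} (hk : k ≠ 0) :
    4 * sin (π / N) ^ 2 ≤ ‖stdAddChar k - 1‖ ^ 2 := by
  have h : ‖stdAddChar k - 1‖ = ‖2 * sin (π * k.val / N)‖ := by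
    rw [stdAddChar_apply, toCircle_apply, show π * k.val / N = 2 * π * k.val / N / 2 by ring,
      ← Complex.norm_exp_I_mul_ofReal_sub_one]
    push_cast
    ring_nf
  have hsin := sin_pi_div_le_sin_pi_mul_div (Nat.one_le_iff_ne_zero.mpr ((val_ne_zero k).mpr hk))
    (val_lt k)
  have h0 : 0 ≤ sin (π / N) := sin_nonneg_of_nonneg_of_le_pi (by positivity)
    (div_le_self pi_pos.le (Nat.one_le_cast.mpr (NeZero.pos N)))
  rw [h, Real.norm_eq_abs, sq_abs]
  nlinarith

theorem four_sin_sq_mul_le_sum_norm_sq_sub (Φ : ZMod N → ℂ) :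
    4 * sin (π / N) ^ 2 * (N * ∑ j, ‖Φ j‖ ^ 2 - ‖∑ j, Φ j‖ ^ 2) ≤
      N * ∑ j, ‖Φ (j + 1) - Φ j‖ ^ 2 := by
  have hΔ (k : ZMod N) : 𝓕 (fun j => Φ (j + 1) - Φ j) k = (stdAddChar k - 1) * 𝓕 Φ k := by
    rw [show (fun j => Φ (j + 1) - Φ j) = (fun j => Φ (j + 1)) - Φ from rfl, map_sub,
      Pi.sub_apply, dft_comp_add_one, sub_one_mul]
  rw [← sum_norm_sq_dft, ← sum_norm_sq_dft, ← dft_apply_zero Φ]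
  calc 4 * sin (π / N) ^ 2 * (∑ k, ‖𝓕 Φ k‖ ^ 2 - ‖𝓕 Φ 0‖ ^ 2)
      = ∑ k ∈ univ.erase 0, 4 * sin (π / N) ^ 2 * ‖𝓕 Φ k‖ ^ 2 := by
        rw [← add_sum_erase _ _ (mem_univ 0), add_sub_cancel_left, mul_sum]
    _ ≤ ∑ k ∈ univ.erase 0, ‖𝓕 (fun j => Φ (j + 1) - Φ j) k‖ ^ 2 := by
        refine sum_le_sum fun k hk => ?_
        rw [hΔ, norm_mul, mul_pow]
        gcongr
        exact four_sin_sq_le_norm_stdAddChar_sub_one_sq (ne_of_mem_erase hk)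
    _ ≤ ∑ k, ‖𝓕 (fun j => Φ (j + 1) - Φ j) k‖ ^ 2 :=
        sum_le_sum_of_subset_of_nonneg (erase_subset _ _) fun _ _ _ => sq_nonneg _

end ZMod

namespace Fin

variable {N : ℕ} [NeZero N]

theorem val_add_one_eq_mod (k : Fin N) : ((k + 1 : Fin N) : ℕ) = (k + 1) % N := by
  rw [val_add, val_one', Nat.add_mod_mod]

theorem val_sub_one_eq_mod (k : Fin N) : ((k - 1 : Fin N) : ℕ) = (k + (N - 1)) % N := by
  rw [val_sub, val_one']
  rcases Nat.lt_or_ge 1 N with h | h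
  · rw [Nat.mod_eq_of_lt h, Nat.add_comm]
  · obtain rfl : N = 1 := le_antisymm h (NeZero.pos N)
    simp

theorem four_sin_sq_mul_le_sum_sq_sub (x : Fin N → ℝ) :
    4 * sin (π / N) ^ 2 * (N * ∑ k, x k ^ 2 - (∑ k, x k) ^ 2) ≤
      N * ∑ k, (x (k + 1) - x k) ^ 2 := by
  let e := (ZMod.finEquiv N).symm
  have h := ZMod.four_sin_sq_mul_le_sum_norm_sq_sub fun z => (x (e z) : ℂ)
  simp only [map_add, map_one, ← Complex.ofReal_sub, ← Complex.ofReal_sum, Complex.norm_real,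
    Real.norm_eq_abs, sq_abs] at h
  rwa [e.bijective.sum_comp (fun k => x k ^ 2), e.bijective.sum_comp x,
    e.bijective.sum_comp (fun k => (x (k + 1) - x k) ^ 2)] at h

end Fin

theorem sum_mul_two_mul_sub_sub {G : Type*} [AddCommGroup G] [Fintype G] (f : G → ℝ) (a : G) :
    ∑ g, f g * (2 * f g - f (g + a) - f (g - a)) = ∑ g, (f (g + a) - f g) ^ 2 := by
  have h1 : ∑ g, f (g + a) ^ 2 = ∑ g, f g ^ 2 := Equiv.sum_comp (Equiv.addRight a) (f · ^ 2)
  have h2 : ∑ g, f g * f (g - a) = ∑ g, f (g + a) * f g := by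
    rw [← Equiv.sum_comp (Equiv.addRight a)]
    simp
  calc ∑ g, f g * (2 * f g - f (g + a) - f (g - a))
      = 2 * ∑ g, f g ^ 2 - ∑ g, f (g + a) * f g - ∑ g, f g * f (g - a) := by
        simp only [mul_sum, ← sum_sub_distrib]
        exact sum_congr rfl fun g _ => by ring
    _ = ∑ g, f (g + a) ^ 2 + ∑ g, f g ^ 2 - 2 * ∑ g, f (g + a) * f g := by
        rw [h1, h2]
        ring
    _ = ∑ g, (f (g + a) - f g) ^ 2 := by
        simp only [mul_sum, ← sum_add_distrib, ← sum_sub_distrib]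
        exact sum_congr rfl fun g _ => by ring

section Matrices

variable {N : ℕ}

theorem dotProduct_Pmat_mulVec (x : Fin N → ℝ) : x ⬝ᵥ Pmat N *ᵥ x = (∑ k, x k) ^ 2 / N := by
  simp only [dotProduct, mulVec, Pmat, of_apply, ← mul_sum, ← sum_mul]
  ring

theorem dotProduct_Mq_mulVec (μ : ℝ) (x : Fin N → ℝ) :
    x ⬝ᵥ Mq μ N *ᵥ x = 3 / 2 * ((∑ k, x k) ^ 2 / N) + x ⬝ᵥ Kdisc μ N *ᵥ x - ∑ k, x k ^ 2 := by
  rw [Mq, sub_mulVec, add_mulVec, smul_mulVec, one_mulVec, dotProduct_sub, dotProduct_add,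
    dotProduct_smul, dotProduct_Pmat_mulVec, smul_eq_mul]
  simp only [dotProduct, sq]

variable [NeZero N] (μ : ℝ)

theorem Kdisc_apply (k l : Fin N) :
    Kdisc μ N k l = μ / (4 * sin (π / N) ^ 2) *
      ((if l = k then 2 else 0) - (if l = k + 1 then 1 else 0) - (if l = k - 1 then 1 else 0)) := by
  simp only [Kdisc, of_apply, Fin.ext_iff (a := l), Fin.val_add_one_eq_mod,
    Fin.val_sub_one_eq_mod]

theorem Kdisc_mulVec (x : Fin N → ℝ) (k : Fin N) :
    (Kdisc μ N *ᵥ x) k = μ / (4 * sin (π / N) ^ 2) * (2 * x k - x (k + 1) - x (k - 1)) := by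
  simp [mulVec, dotProduct, Kdisc_apply, sub_mul, ite_mul, sum_sub_distrib, mul_assoc, ← mul_sum]

theorem dotProduct_Kdisc_mulVec (x : Fin N → ℝ) :
    x ⬝ᵥ Kdisc μ N *ᵥ x = μ / (4 * sin (π / N) ^ 2) * ∑ k, (x (k + 1) - x k) ^ 2 := by
  simp only [dotProduct, Kdisc_mulVec, mul_left_comm (x _), ← mul_sum, sum_mul_two_mul_sub_sub]

theorem Kdisc_isHermitian : (Kdisc μ N).IsHermitian := by
  ext k l
  have h1 : k = l + 1 ↔ l = k - 1 := by rw [eq_sub_iff_add_eq, eq_comm]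
  have h2 : k = l - 1 ↔ l = k + 1 := by rw [eq_sub_iff_add_eq, eq_comm]
  simp only [conjTranspose_apply, star_trivial, Kdisc_apply, h1, h2, eq_comm (a := k)]
  ring

theorem Mq_isHermitian : (Mq μ N).IsHermitian := by
  have hP : (Pmat N).IsHermitian := by ext; simp [Pmat]
  exact ((hP.smul (IsSelfAdjoint.all _)).add (Kdisc_isHermitian μ)).sub isHermitian_one

variable {μ}

theorem mul_variance_le_dotProduct_Kdisc_mulVec (hμ : 0 ≤ μ) (hN : 2 ≤ N) (x : Fin N → ℝ) :
    μ * (N * ∑ k, x k ^ 2 - (∑ k, x k) ^ 2) ≤ N * (x ⬝ᵥ Kdisc μ N *ᵥ x) := by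
  have hsin : 0 < sin (π / N) :=
    sin_pos_of_pos_of_lt_pi (by positivity) (div_lt_self pi_pos (by exact_mod_cast hN))
  rw [dotProduct_Kdisc_mulVec]
  calc μ * (N * ∑ k, x k ^ 2 - (∑ k, x k) ^ 2)
      = μ / (4 * sin (π / N) ^ 2) *
          (4 * sin (π / N) ^ 2 * (N * ∑ k, x k ^ 2 - (∑ k, x k) ^ 2)) := by
        field_simp
    _ ≤ μ / (4 * sin (π / N) ^ 2) * (N * ∑ k, (x (k + 1) - x k) ^ 2) :=
        mul_le_mul_of_nonneg_left (Fin.four_sin_sq_mul_le_sum_sq_sub x) (by positivity)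
    _ = N * (μ / (4 * sin (π / N) ^ 2) * ∑ k, (x (k + 1) - x k) ^ 2) := by ring

theorem Mq_posDef (hμ : 1 < μ) (hN : 2 ≤ N) : (Mq μ N).PosDef := by
  refine PosDef.of_dotProduct_mulVec_pos (Mq_isHermitian μ) fun x hx => ?_
  rw [star_trivial, dotProduct_Mq_mulVec]
  have hK := mul_variance_le_dotProduct_Kdisc_mulVec (by linarith) hN x
  have hvar : (∑ k, x k) ^ 2 ≤ N * ∑ k, x k ^ 2 := by
    simpa using sq_sum_le_card_mul_sum_sq (s := univ) (f := x)
  have hsq : 0 < ∑ k, x k ^ 2 := by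
    obtain ⟨k, hk⟩ : ∃ k, x k ≠ 0 := Function.ne_iff.mp hx
    exact lt_of_lt_of_le (by positivity) (single_le_sum (fun i _ => sq_nonneg (x i)) (mem_univ k))
  have hN' : (0 : ℝ) < N := Nat.cast_pos.mpr (NeZero.pos N)
  rw [← mul_pos_iff_of_pos_left hN', mul_sub, mul_add, mul_left_comm, mul_div_cancel₀ _ hN'.ne']
  have hmin : 0 < min (μ - 1) (1 / 2) := lt_min (by linarith) (by norm_num)
  calc 0 < min (μ - 1) (1 / 2) * (N * ∑ k, x k ^ 2) := by positivity
    _ = min (μ - 1) (1 / 2) * (N * ∑ k, x k ^ 2 - (∑ k, x k) ^ 2)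
          + min (μ - 1) (1 / 2) * (∑ k, x k) ^ 2 := by ring
    _ ≤ (μ - 1) * (N * ∑ k, x k ^ 2 - (∑ k, x k) ^ 2) + 1 / 2 * (∑ k, x k) ^ 2 := by
        gcongr
        · exact min_le_left _ _
        · exact min_le_right _ _
    _ ≤ _ := by linarith

end Matrices

theorem pow_four_sum_le_card_pow_three_mul_sum_pow_four {ι : Type*} [Fintype ι] (y : ι → ℝ) :
    (∑ i, y i) ^ 4 ≤ (Fintype.card ι : ℝ) ^ 3 * ∑ i, y i ^ 4 := by
  have h2 : (∑ i, y i) ^ 2 ≤ Fintype.card ι * ∑ i, y i ^ 2 := sq_sum_le_card_mul_sum_sq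
  have h4 : (∑ i, y i ^ 2) ^ 2 ≤ Fintype.card ι * ∑ i, (y i ^ 2) ^ 2 := sq_sum_le_card_mul_sum_sq
  calc (∑ i, y i) ^ 4 = ((∑ i, y i) ^ 2) ^ 2 := by ring
    _ ≤ (Fintype.card ι * ∑ i, y i ^ 2) ^ 2 := by gcongr
    _ = (Fintype.card ι : ℝ) ^ 2 * (∑ i, y i ^ 2) ^ 2 := by ring
    _ ≤ (Fintype.card ι : ℝ) ^ 2 * (Fintype.card ι * ∑ i, (y i ^ 2) ^ 2) := by gcongr
    _ = (Fintype.card ι : ℝ) ^ 3 * ∑ i, y i ^ 4 := by simp only [← pow_mul]; ring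

theorem quartic_sum_lower_bound {ι : Type*} [Fintype ι] [Nonempty ι] (x : ι → ℝ) {ε : ℝ}
    (hε : ε ^ 2 = 1) (hmean : -1 ≤ ε * ((∑ i, x i) / Fintype.card ι)) :
    3 / 4 * ((∑ i, x i) ^ 2 / Fintype.card ι) ≤
      1 / 4 * ∑ i, x i ^ 4 + ε * ∑ i, x i ^ 3 + 3 / 2 * ∑ i, x i ^ 2 := by
  set n : ℝ := (Fintype.card ι : ℝ)
  set R := 1 / 4 * ∑ i, x i ^ 4 + ε * ∑ i, x i ^ 3 + 3 / 2 * ∑ i, x i ^ 2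
  have hn : 0 < n := Nat.cast_pos.mpr Fintype.card_pos
  set m := (∑ i, x i) / n
  have hsum : ∑ i, x i = n * m := (mul_div_cancel₀ _ hn.ne').symm
  have hterm (t : ℝ) : (t + ε) ^ 4 = t ^ 4 + 4 * ε * t ^ 3 + 6 * t ^ 2 + 4 * ε * t + 1 := by
    linear_combination (6 * t ^ 2 + 4 * ε * t + ε ^ 2 + 1) * hε
  have hshift : ∑ i, (x i + ε) = n * (m + ε) := by
    rw [sum_add_distrib, hsum, sum_const, card_univ, nsmul_eq_mul]; ring
  have hexpand : ∑ i, (x i + ε) ^ 4 = 4 * R + 4 * ε * (n * m) + n := by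
    simp only [hterm, sum_add_distrib, ← mul_sum, sum_const, card_univ, nsmul_eq_mul, hsum, R]
    ring
  have hpow := pow_four_sum_le_card_pow_three_mul_sum_pow_four fun i => x i + ε
  rw [hshift, hexpand] at hpow
  have hmean_pow : n * (m + ε) ^ 4 ≤ 4 * R + 4 * ε * (n * m) + n := by
    refine le_of_mul_le_mul_left ?_ (pow_pos hn 3)
    linarith [show (n * (m + ε)) ^ 4 = n ^ 3 * (n * (m + ε) ^ 4) by ring]
  have hkey : 0 ≤ (m + ε) ^ 4 - 4 * ε * m - 1 - 3 * m ^ 2 := by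
    have : (m + ε) ^ 4 - 4 * ε * m - 1 - 3 * m ^ 2 = m ^ 2 * (ε * m + 1) * (ε * m + 3) := by
      linear_combination (-m ^ 4 + 6 * m ^ 2 + 4 * ε * m + 1 + ε ^ 2) * hε
    rw [this]
    exact mul_nonneg (mul_nonneg (sq_nonneg m) (by linarith)) (by linarith)
  rw [hsum, show (n * m) ^ 2 / n = n * m ^ 2 by field_simp]
  linarith [mul_nonneg hn.le hkey]

theorem Venergy_add_one {N : ℕ} [NeZero N] (μ : ℝ) (x : Fin N → ℝ) :
    Venergy μ N (fun k => x k + 1) =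
      1 / 4 * ∑ k, x k ^ 4 + ∑ k, x k ^ 3 + ∑ k, x k ^ 2 + 1 / 2 * (x ⬝ᵥ Kdisc μ N *ᵥ x) := by
  have hK : (fun k => x k + 1) ⬝ᵥ Kdisc μ N *ᵥ (fun k => x k + 1) = x ⬝ᵥ Kdisc μ N *ᵥ x := by
    simp only [dotProduct_Kdisc_mulVec, add_sub_add_right_eq_sub]
  have hmid : ∑ k, (x k + 1) * ((Kdisc μ N *ᵥ fun k => x k + 1) k - (x k + 1)) =
      x ⬝ᵥ Kdisc μ N *ᵥ x - ∑ k, (x k + 1) ^ 2 := by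
    simp only [mul_sub, sum_sub_distrib, sq]
    rw [← hK]
    rfl
  have h4 : ∑ k, (x k + 1) ^ 4 =
      ∑ k, x k ^ 4 + 4 * ∑ k, x k ^ 3 + 6 * ∑ k, x k ^ 2 + 4 * ∑ k, x k + N := by
    have hterm (t : ℝ) : (t + 1) ^ 4 = t ^ 4 + 4 * t ^ 3 + 6 * t ^ 2 + 4 * t + 1 := by ring
    simp only [hterm, sum_add_distrib, ← mul_sum, sum_const, card_univ, Fintype.card_fin,
      nsmul_eq_mul, mul_one]
  have h2 : ∑ k, (x k + 1) ^ 2 = ∑ k, x k ^ 2 + 2 * ∑ k, x k + N := by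
    simp only [add_sq, sum_add_distrib, ← mul_sum, sum_const, card_univ, Fintype.card_fin,
      nsmul_eq_mul, one_pow, mul_one]
  rw [Venergy, hmid, h4, h2]
  ring
/-- quadratic lower bounds on the (shifted) energy:
`Q⁻¹ = (3/2)P + K − I` is positive definite, `V(x+I₊) ≥ (1/2)⟨x,Q⁻¹x⟩` when
`x̄ ≥ −1`, and `(1/4)Σx⁴ − |Σx³| + (1/2)⟨x,(K+2I)x⟩ ≥ (1/2)⟨x,Q⁻¹x⟩` when `|x̄| ≤ 1`. -/
theorem quadratic_lower_bounds (μ : ℝ) (hμ : 1 < μ) (N : ℕ) (hN : 2 ≤ N) :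
    (Mq μ N).PosDef ∧
    (∀ x : Fin N → ℝ, -1 ≤ (1 / (N : ℝ)) * ∑ j, x j →
      (1 / 2) * (x ⬝ᵥ (Mq μ N).mulVec x) ≤ Venergy μ N (fun k => x k + 1)) ∧
    (∀ x : Fin N → ℝ, |(1 / (N : ℝ)) * ∑ j, x j| ≤ 1 →
      (1 / 2) * (x ⬝ᵥ (Mq μ N).mulVec x) ≤
        (1 / 4) * ∑ k, x k ^ 4 - |∑ k, x k ^ 3|
          + (1 / 2) * ∑ k, x k * ((Kdisc μ N + 2).mulVec x k)) := by
  have : NeZero N := ⟨by omega⟩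
  have hmean (x : Fin N → ℝ) : 1 / (N : ℝ) * ∑ j, x j = (∑ j, x j) / Fintype.card (Fin N) := by
    rw [Fintype.card_fin, one_div_mul_eq_div]
  refine ⟨Mq_posDef hμ hN, fun x hx => ?_, fun x hx => ?_⟩
  · have h := quartic_sum_lower_bound x (one_pow 2) (by rwa [one_mul, ← hmean])
    rw [Fintype.card_fin] at h
    rw [dotProduct_Mq_mulVec, Venergy_add_one]
    linarith
  · have hK2 : ∑ k, x k * ((Kdisc μ N + 2) *ᵥ x) k = x ⬝ᵥ Kdisc μ N *ᵥ x + 2 * ∑ k, x k ^ 2 := by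
      rw [← dotProduct, add_mulVec, ofNat_mulVec, dotProduct_add, dotProduct_smul]
      simp [dotProduct, sq]
    rw [hmean, abs_le] at hx
    have hplus := quartic_sum_lower_bound x (ε := 1) (by norm_num) (by linarith)
    have hminus := quartic_sum_lower_bound x (ε := -1) (by norm_num) (by linarith)
    rw [Fintype.card_fin] at hplus hminus
    rw [dotProduct_Mq_mulVec, hK2]
    cases abs_cases (∑ k, x k ^ 3) <;> linarith
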